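/- arXiv:0712.3402 — 3 statements merged into one kernel-verified Lean document; each statement's English description precedes it below -/
import Mathlib

section
/- For two symmetric positive definite real matrices K and L of the same size, det((K+L)/2) ≥ det(K)^{1/2} · det(L)^{1/2}. -/
/-!
Write `K = S * S` with `S = √K` and `L = S * M * S` with `M = S⁻¹ * L * S⁻¹ ⪰ 0`. Then
`(K + L) / 2 = S * ((1 + M) / 2) * S`, so after dividing by `det K` the inequality becomes
`√(det M) ≤ det ((1 + M) / 2)`, which is the product over the eigenvalues `μ ≥ 0` of `M` of the
scalar AM-GM inequality `√μ ≤ (1 + μ) / 2`.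
-/

open Matrix

variable {n : Type*} [Fintype n] [DecidableEq n]

theorem Real.sqrt_le_inv_two_mul_one_add {x : ℝ} (hx : 0 ≤ x) : √x ≤ 2⁻¹ * (1 + x) := by
  nlinarith [Real.sq_sqrt hx, sq_nonneg (√x - 1)]

theorem Matrix.div_two_eq_inv_two_smul {R : Type*} [Field R] [NeZero (2 : R)]
    (A : Matrix n n R) : A / 2 = (2⁻¹ : R) • A := by
  have h2 : (2 : Matrix n n R) = (2 : R) • 1 := by rw [two_smul, one_add_one_eq_two]
  rw [div_eq_mul_inv, inv_eq_left_inv (B := (2⁻¹ : R) • 1)]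
  · simp
  · rw [h2, smul_mul_smul, one_mul, inv_mul_cancel₀ two_ne_zero, one_smul]

theorem Matrix.IsHermitian.det_cfc {𝕜 : Type*} [RCLike 𝕜] {A : Matrix n n 𝕜}
    (hA : A.IsHermitian) (f : ℝ → ℝ) :
    (cfc f A).det = ∏ i, (f (hA.eigenvalues i) : 𝕜) := by
  rw [hA.cfc_eq]
  simp [IsHermitian.cfc, -Unitary.conjStarAlgAut_apply]

theorem Matrix.PosSemidef.sqrt_det_le_det_one_add_div_two {M : Matrix n n ℝ}
    (hM : M.PosSemidef) : √M.det ≤ ((1 + M) / 2).det := by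
  have hμ := hM.eigenvalues_nonneg
  have hMsa : IsSelfAdjoint M := hM.isHermitian
  have hcfc : (1 + M) / 2 = cfc (fun x : ℝ ↦ 2⁻¹ * (1 + x)) M := by
    rw [cfc_const_mul .., cfc_const_add .., cfc_id' .., div_two_eq_inv_two_smul]
    simp
  rw [hcfc, hM.isHermitian.det_cfc, hM.isHermitian.det_eq_prod_eigenvalues]
  simp_rw [RCLike.ofReal_real_eq_id, id_eq]
  rw [Real.sqrt_prod _ fun i _ ↦ hμ i]
  exact Finset.prod_le_prod (fun i _ ↦ Real.sqrt_nonneg _)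
    fun i _ ↦ Real.sqrt_le_inv_two_mul_one_add (hμ i)

open scoped MatrixOrder ComplexOrder in
theorem Matrix.PosDef.exists_eq_mul_self_and_eq_mul_mul_self {𝕜 : Type*} [RCLike 𝕜]
    {K L : Matrix n n 𝕜} (hK : K.PosDef) (hL : L.PosSemidef) :
    ∃ S M : Matrix n n 𝕜, M.PosSemidef ∧ K = S * S ∧ L = S * M * S := by
  set S := CFC.sqrt K
  have hS : S.IsHermitian := (nonneg_iff_posSemidef.mp (CFC.sqrt_nonneg K)).isHermitian
  have hSdet : IsUnit S.det := (isUnit_iff_isUnit_det S).mp <|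
    CFC.isUnit_sqrt_iff_isStrictlyPositive.mpr (isStrictlyPositive_iff_posDef.mpr hK)
  refine ⟨S, S⁻¹ * L * S⁻¹, ?_, (CFC.sqrt_mul_sqrt_self K hK.posSemidef.nonneg).symm, ?_⟩
  · simpa only [hS.inv.eq] using hL.mul_mul_conjTranspose_same S⁻¹
  · rw [Matrix.mul_assoc, nonsing_inv_mul_cancel_right _ _ hSdet,
      mul_nonsing_inv_cancel_left _ _ hSdet]

theorem det_avg_ge_sqrt_det_mul_sqrt_det {n : ℕ}
    (K L : Matrix (Fin n) (Fin n) ℝ) (hK : K.PosDef) (hL : L.PosDef) :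
    Real.sqrt K.det * Real.sqrt L.det ≤ ((K + L) / 2).det := by
  obtain ⟨S, M, hM, rfl, rfl⟩ := hK.exists_eq_mul_self_and_eq_mul_mul_self hL.posSemidef
  have hsum : (S * S + S * M * S) / 2 = S * ((1 + M) / 2) * S := by
    simp only [div_two_eq_inv_two_smul, Matrix.mul_smul, Matrix.smul_mul, Matrix.mul_add,
      Matrix.add_mul, Matrix.mul_one]
  have hsqrt : √(S * S).det * √(S * M * S).det = S.det * S.det * √M.det := by
    rw [det_mul, det_mul, det_mul, mul_right_comm, Real.sqrt_mul_self_eq_abs,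
      Real.sqrt_mul (mul_self_nonneg _), Real.sqrt_mul_self_eq_abs, ← mul_assoc,
      abs_mul_abs_self]
  rw [hsum, hsqrt, det_mul, det_mul, mul_right_comm S.det ((1 + M) / 2).det]
  exact mul_le_mul_of_nonneg_left hM.sqrt_det_le_det_one_add_div_two (mul_self_nonneg _)
end

section
/- The Bhattacharyya kernel k_B(K,L) = det(K)^{1/2} · det(L)^{1/2} · det((K+L)/2)^{-1}, defined on symmetric positive definite matrices, satisfies 0 < k_B(K,L) ≤ 1 for all symmetric positive definite K, L. -/
/-!
With `S = K^{1/2}` and `M = S⁻¹ L S⁻¹ ⪰ 0` one has `K + L = S (1 + M) S` and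
`√(det M) = √(det L) / det S`, so `det ((K + L) / 2) ≥ √(det K) √(det L)` reduces to
`det (1 + M) ≥ 2ⁿ √(det M)`. Diagonalising `M`, this is the product over its eigenvalues `λ ≥ 0`
of the AM–GM inequality `1 + λ ≥ 2 √λ`.
-/

open scoped MatrixOrder

noncomputable def bhattacharyya {n : ℕ} (K L : Matrix (Fin n) (Fin n) ℝ) : ℝ :=
  Real.sqrt K.det * Real.sqrt L.det * (((K + L) / 2).det)⁻¹

theorem Real.two_mul_sqrt_le_one_add {x : ℝ} (hx : 0 ≤ x) : 2 * √x ≤ 1 + x := by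
  nlinarith [sq_nonneg (√x - 1), Real.sq_sqrt hx]

namespace Matrix

variable {ι : Type*} [Fintype ι] [DecidableEq ι]

theorem div_two_eq_inv_two_smul_s1 {K : Type*} [Field K] [NeZero (2 : K)] (A : Matrix ι ι K) :
    A / 2 = (2⁻¹ : K) • A := by
  have h2 : (2 : Matrix ι ι K)⁻¹ = (2⁻¹ : K) • 1 := by
    refine inv_eq_right_inv ?_
    rw [← one_add_one_eq_two, ← two_smul K (1 : Matrix ι ι K), smul_mul_smul_comm, mul_one,
      mul_inv_cancel₀ two_ne_zero, one_smul]
  rw [div_eq_mul_inv, h2, mul_smul_comm, mul_one]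

theorem IsHermitian.det_cfc_s1 {𝕜 : Type*} [RCLike 𝕜] {A : Matrix ι ι 𝕜} (hA : A.IsHermitian)
    (f : ℝ → ℝ) : (cfc f A).det = ∏ i, (f (hA.eigenvalues i) : 𝕜) := by
  rw [hA.cfc_eq]
  simp [IsHermitian.cfc, -Unitary.conjStarAlgAut_apply]

theorem IsHermitian.det_one_add {𝕜 : Type*} [RCLike 𝕜] {A : Matrix ι ι 𝕜} (hA : A.IsHermitian) :
    (1 + A).det = ∏ i, (1 + hA.eigenvalues i : 𝕜) := by
  have h : 1 + A = cfc (fun x : ℝ ↦ 1 + x) A := by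
    rw [cfc_add .., cfc_const_one .., cfc_id' ..]
  simp [h, hA.det_cfc_s1]

theorem PosSemidef.two_pow_mul_sqrt_det_le_det_one_add {A : Matrix ι ι ℝ} (hA : A.PosSemidef) :
    2 ^ Fintype.card ι * √A.det ≤ (1 + A).det := by
  rw [hA.1.det_one_add, hA.1.det_eq_prod_eigenvalues]
  simp only [RCLike.ofReal_real_eq_id, id_eq]
  rw [Real.sqrt_prod _ fun i _ ↦ hA.eigenvalues_nonneg i, ← Finset.card_univ,
    ← Finset.prod_const, ← Finset.prod_mul_distrib]
  exact Finset.prod_le_prod (fun i _ ↦ by positivity)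
    fun i _ ↦ Real.two_mul_sqrt_le_one_add (hA.eigenvalues_nonneg i)

theorem PosDef.two_pow_mul_sqrt_det_mul_sqrt_det_le_det_add {K L : Matrix ι ι ℝ} (hK : K.PosDef)
    (hL : L.PosSemidef) : 2 ^ Fintype.card ι * (√K.det * √L.det) ≤ (K + L).det := by
  set S := CFC.sqrt K
  set M := S⁻¹ * L * S⁻¹
  have hSS : S * S = K := CFC.sqrt_mul_sqrt_self K hK.posSemidef.nonneg
  have hdetS : S.det = √K.det := by
    rw [hK.posSemidef.det_sqrt, RCLike.sqrt_real]
  have hdetS_pos : 0 < S.det := hdetS ▸ Real.sqrt_pos.mpr hK.det_pos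
  have hSu : IsUnit S.det := hdetS_pos.ne'.isUnit
  have hS : S.PosSemidef := nonneg_iff_posSemidef.mp (CFC.sqrt_nonneg K)
  have hM : M.PosSemidef := by
    simpa only [hS.1.inv.eq] using hL.mul_mul_conjTranspose_same S⁻¹
  have hKL : K + L = S * (1 + M) * S := by
    rw [Matrix.mul_add, Matrix.add_mul, Matrix.mul_one, hSS, ← Matrix.mul_assoc,
      ← Matrix.mul_assoc, mul_nonsing_inv _ hSu, Matrix.one_mul, Matrix.mul_assoc,
      nonsing_inv_mul _ hSu, Matrix.mul_one]
  have hsqrtM : √M.det = √L.det / S.det := by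
    rw [det_mul, det_mul, det_nonsing_inv, Ring.inverse_eq_inv',
      show S.det⁻¹ * L.det * S.det⁻¹ = L.det / S.det ^ 2 by ring,
      Real.sqrt_div' _ (sq_nonneg _), Real.sqrt_sq hdetS_pos.le]
  calc 2 ^ Fintype.card ι * (√K.det * √L.det)
      = S.det * (2 ^ Fintype.card ι * √M.det) * S.det := by
        rw [hsqrtM, ← hdetS]; field_simp
    _ ≤ S.det * (1 + M).det * S.det := by
        gcongr; exact hM.two_pow_mul_sqrt_det_le_det_one_add
    _ = (K + L).det := by rw [hKL, det_mul, det_mul]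

theorem PosDef.sqrt_det_mul_sqrt_det_le_det_half_add {K L : Matrix ι ι ℝ} (hK : K.PosDef)
    (hL : L.PosSemidef) : √K.det * √L.det ≤ ((K + L) / 2).det := by
  rw [div_two_eq_inv_two_smul_s1, det_smul, inv_pow, le_inv_mul_iff₀ (by positivity)]
  exact hK.two_pow_mul_sqrt_det_mul_sqrt_det_le_det_add hL

end Matrix

theorem bhattacharyya_pos_le_one {n : ℕ}
    (K L : Matrix (Fin n) (Fin n) ℝ) (hK : K.PosDef) (hL : L.PosDef) :
    0 < bhattacharyya K L ∧ bhattacharyya K L ≤ 1 := by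
  have hnum : 0 < √K.det * √L.det :=
    mul_pos (Real.sqrt_pos.mpr hK.det_pos) (Real.sqrt_pos.mpr hL.det_pos)
  have hle := hK.sqrt_det_mul_sqrt_det_le_det_half_add hL.posSemidef
  have hden : 0 < ((K + L) / 2).det := hnum.trans_le hle
  rw [bhattacharyya, ← div_eq_mul_inv]
  exact ⟨div_pos hnum hden, (div_le_one hden).mpr hle⟩
end

section
/- The Bhattacharyya kernel is a positive semidefinite kernel on symmetric positive definite matrices: for any finite family K_1, …, K_m of symmetric positive definite n×n real matrices, the m×m Gram matrix G with G_{ab} = k_B(K_a, K_b) = det(K_a)^{1/2} det(K_b)^{1/2} det((K_a+K_b)/2)^{-1} is positive semidefinite. -/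
/-!
For a positive definite `K` put `φ_K x = exp (-(xᵀ K x) / 2)`, a square-integrable function on
`ℝⁿ`. The Gaussian integral `∫ exp (-(xᵀ M x)) = π^(n/2) / √(det M)` gives
`⟪φ_K, φ_L⟫ = π^(n/2) / √(det ((K + L) / 2))`, so the Gram matrix `H` of the `φ_{K_a}` in `L²` is
positive semidefinite and `k_B(K_a, K_b) = c_a c_b H_ab²` with `c_a = √(det K_a) / π^(n/2)`.
That is, the Bhattacharyya Gram matrix is the Hadamard product `c cᵀ ⊙ H ⊙ H`, which is positive
semidefinite by the Schur product theorem.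
-/

open MeasureTheory Real Matrix

theorem MeasureTheory.posSemidef_matrix_integral_mul {α n : Type*} [MeasurableSpace α]
    {μ : Measure α} [Finite n] {f : n → α → ℝ} (hf : ∀ i, MemLp (f i) 2 μ) :
    (of fun i j ↦ ∫ x, f i x * f j x ∂μ).PosSemidef := by
  have h_gram : (of fun i j ↦ ∫ x, f i x * f j x ∂μ) = gram ℝ fun i ↦ (hf i).toLp := by
    ext i j
    rw [of_apply, gram_apply, L2.inner_def]
    refine integral_congr_ae ?_
    filter_upwards [(hf i).coeFn_toLp, (hf j).coeFn_toLp] with x hi hj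
    simp [hi, hj, mul_comm]
  rw [h_gram]
  exact posSemidef_gram ℝ _

variable {ι : Type*} [Fintype ι]

theorem integrable_exp_neg_sum_sq : Integrable fun y : ι → ℝ ↦ exp (-∑ i, y i ^ 2) := by
  have h := Integrable.fintype_prod (f := fun (_ : ι) (x : ℝ) ↦ exp (-x ^ 2))
    fun _ ↦ by simpa using integrable_exp_neg_mul_sq one_pos
  simp_rw [← Finset.sum_neg_distrib, exp_sum]
  exact h

theorem integral_exp_neg_sum_sq :
    ∫ y : ι → ℝ, exp (-∑ i, y i ^ 2) = sqrt π ^ Fintype.card ι := by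
  simp_rw [← Finset.sum_neg_distrib, exp_sum]
  rw [integral_fintype_prod_volume_eq_pow (fun x : ℝ ↦ exp (-x ^ 2))]
  simpa using congrArg (· ^ Fintype.card ι) (integral_gaussian 1)

namespace Matrix

variable [DecidableEq ι]

theorem div_two_eq_smul {R : Type*} [Field R] [NeZero (2 : R)] (A : Matrix ι ι R) :
    A / 2 = (2 : R)⁻¹ • A := by
  have two_eq : (2 : Matrix ι ι R) = (2 : R) • 1 := by rw [two_smul, one_add_one_eq_two]
  have inv_two : (2 : Matrix ι ι R)⁻¹ = (2 : R)⁻¹ • 1 :=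
    inv_eq_right_inv <| by
      rw [mul_smul_comm, mul_one, two_eq, smul_smul, inv_mul_cancel₀ two_ne_zero, one_smul]
  rw [div_eq_mul_inv, inv_two, mul_smul_comm, mul_one]

theorem measurableEmbedding_mulVec {S : Matrix ι ι ℝ} (hS : S.det ≠ 0) :
    MeasurableEmbedding (S *ᵥ ·) :=
  (LinearEquiv.toContinuousLinearEquiv
    (S.toLinearEquiv' (invertibleOfIsUnitDet S hS.isUnit))).toHomeomorph.measurableEmbedding

theorem map_mulVec_volume {S : Matrix ι ι ℝ} (hS : S.det ≠ 0) :
    Measure.map (S *ᵥ ·) volume = ENNReal.ofReal |S.det⁻¹| • (volume : Measure (ι → ℝ)) := by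
  have h := Measure.map_linearMap_addHaar_pi_eq_smul_addHaar (f := S.toLin')
    (by rwa [LinearMap.det_toLin']) volume
  rwa [LinearMap.det_toLin', toLin'_apply'] at h

theorem integrable_comp_mulVec_iff {S : Matrix ι ι ℝ} (hS : S.det ≠ 0) {g : (ι → ℝ) → ℝ} :
    Integrable (fun x ↦ g (S *ᵥ x)) ↔ Integrable g := by
  rw [← Function.comp_def, ← (measurableEmbedding_mulVec hS).integrable_map_iff,
    map_mulVec_volume hS, integrable_smul_measure (by simpa using hS) ENNReal.ofReal_ne_top]

theorem integral_comp_mulVec {S : Matrix ι ι ℝ} (hS : S.det ≠ 0) (g : (ι → ℝ) → ℝ) :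
    ∫ x, g (S *ᵥ x) = |S.det|⁻¹ * ∫ y, g y := by
  rw [← (measurableEmbedding_mulVec hS).integral_map, map_mulVec_volume hS,
    integral_smul_measure, ENNReal.toReal_ofReal (abs_nonneg _), abs_inv, smul_eq_mul]

namespace PosDef

variable {K L : Matrix ι ι ℝ}

theorem div_two (hK : K.PosDef) : (K / 2).PosDef :=
  div_two_eq_smul K ▸ hK.smul (by norm_num)

open scoped MatrixOrder in
theorem exists_dotProduct_mulVec_eq_sum_sq (hK : K.PosDef) :
    ∃ S : Matrix ι ι ℝ, S.det = sqrt K.det ∧ ∀ x, x ⬝ᵥ K *ᵥ x = ∑ i, (S *ᵥ x) i ^ 2 := by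
  refine ⟨CFC.sqrt K, by simpa using hK.posSemidef.det_sqrt, fun x ↦ ?_⟩
  have hSS := CFC.sqrt_mul_sqrt_self K hK.posSemidef.nonneg
  have hS : (CFC.sqrt K)ᵀ = CFC.sqrt K := (CFC.sqrt_nonneg K).posSemidef.isHermitian.eq
  generalize CFC.sqrt K = S at hSS hS ⊢
  rw [← hSS, ← mulVec_mulVec, dotProduct_mulVec, ← mulVec_transpose, hS]
  simp [dotProduct, sq]

theorem integrable_exp_neg_dotProduct_mulVec (hK : K.PosDef) :
    Integrable fun x ↦ exp (-(x ⬝ᵥ K *ᵥ x)) := by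
  obtain ⟨S, hS, hK_eq⟩ := hK.exists_dotProduct_mulVec_eq_sum_sq
  simp_rw [hK_eq]
  exact (integrable_comp_mulVec_iff (g := fun y ↦ exp (-∑ i, y i ^ 2))
    (hS ▸ (sqrt_pos.2 hK.det_pos).ne')).2 integrable_exp_neg_sum_sq

theorem integral_exp_neg_dotProduct_mulVec (hK : K.PosDef) :
    ∫ x, exp (-(x ⬝ᵥ K *ᵥ x)) = sqrt π ^ Fintype.card ι / sqrt K.det := by
  obtain ⟨S, hS, hK_eq⟩ := hK.exists_dotProduct_mulVec_eq_sum_sq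
  have hS_pos : 0 < S.det := hS ▸ sqrt_pos.2 hK.det_pos
  simp_rw [hK_eq]
  rw [integral_comp_mulVec (g := fun y ↦ exp (-∑ i, y i ^ 2)) hS_pos.ne',
    integral_exp_neg_sum_sq, abs_of_pos hS_pos, hS, inv_mul_eq_div]

theorem memLp_two_exp_neg_dotProduct_mulVec_div_two (hK : K.PosDef) :
    MemLp (fun x ↦ exp (-(x ⬝ᵥ K *ᵥ x) / 2)) 2 := by
  refine (memLp_two_iff_integrable_sq (Continuous.aestronglyMeasurable (by fun_prop))).2 ?_
  refine hK.integrable_exp_neg_dotProduct_mulVec.congr (ae_of_all _ fun x ↦ ?_)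
  simp only [← exp_nat_mul]
  ring_nf

theorem integral_exp_neg_dotProduct_mulVec_div_two_mul (hK : K.PosDef) (hL : L.PosDef) :
    ∫ x, exp (-(x ⬝ᵥ K *ᵥ x) / 2) * exp (-(x ⬝ᵥ L *ᵥ x) / 2) =
      sqrt π ^ Fintype.card ι / sqrt ((K + L) / 2).det := by
  have h_exponent (x : ι → ℝ) :
      -(x ⬝ᵥ K *ᵥ x) / 2 + -(x ⬝ᵥ L *ᵥ x) / 2 = -(x ⬝ᵥ ((K + L) / 2) *ᵥ x) := by
    rw [div_two_eq_smul, smul_mulVec, add_mulVec, dotProduct_smul, dotProduct_add, smul_eq_mul]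
    ring
  simp_rw [← exp_add, h_exponent]
  exact (hK.add hL).div_two.integral_exp_neg_dotProduct_mulVec

end PosDef

end Matrix

theorem bhattacharyya_gram_posSemidef {n m : ℕ}
    (K : Fin m → Matrix (Fin n) (Fin n) ℝ) (hK : ∀ a, (K a).PosDef) :
    (Matrix.of fun a b : Fin m =>
      Real.sqrt (K a).det * Real.sqrt (K b).det *
        (((K a + K b) / 2).det)⁻¹).PosSemidef := by
  set H := of fun a b : Fin m ↦
    ∫ x : Fin n → ℝ, exp (-(x ⬝ᵥ K a *ᵥ x) / 2) * exp (-(x ⬝ᵥ K b *ᵥ x) / 2)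
  have hH : H.PosSemidef := posSemidef_matrix_integral_mul fun a ↦
    (hK a).memLp_two_exp_neg_dotProduct_mulVec_div_two
  let c a := sqrt (K a).det / sqrt π ^ n
  have h_eq : (of fun a b ↦ sqrt (K a).det * sqrt (K b).det * (((K a + K b) / 2).det)⁻¹) =
      vecMulVec c (star c) ⊙ (H ⊙ H) := by
    ext a b
    have hdet : 0 < ((K a + K b) / 2).det := ((hK a).add (hK b)).div_two.det_pos
    have hH_ab : H a b = sqrt π ^ n / sqrt ((K a + K b) / 2).det := by
      simpa [H] using (hK a).integral_exp_neg_dotProduct_mulVec_div_two_mul (hK b)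
    simp only [of_apply, hadamard_apply, vecMulVec_apply, star_trivial, c, hH_ab]
    field_simp
    rw [sq_sqrt hdet.le]
  rw [h_eq]
  exact (posSemidef_vecMulVec_self_star c).hadamard (hH.hadamard hH)
end
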